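/- Let p ≥ 3 be prime, a, b ∈ E_p, and let x₀ ∈ E_p be the fixed point of g(u) = a(b²u² + 1)/(b² + u²). Then |x₀ − a|_p = |x₀ − 1|_p · |b − 1|_p; in particular |x₀ − a|_p < |b − 1|_p when b ≠ 1. -/

import Mathlib

/-!
Clearing the denominator in the fixed-point equation gives the exact factorization
`(x₀ - a) (b² + x₀²) = a (x₀² - 1) (b² - 1)`. In an ultrametric field with `‖2‖ = 1` (such as
`ℚ_p`, `p` odd), `a` and `b² + x₀² ≡ 2` are units, and `‖u² - 1‖ = ‖u - 1‖ ‖u + 1‖ = ‖u - 1‖`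
because `u + 1 ≡ 2` whenever `‖u - 1‖ < 1`.
-/

open IsUltrametricDist

lemma sub_mul_eq_of_fixed_point {K : Type*} [Field K] {a b x : K} (hden : b ^ 2 + x ^ 2 ≠ 0)
    (hfix : a * (b ^ 2 * x ^ 2 + 1) / (b ^ 2 + x ^ 2) = x) :
    (x - a) * (b ^ 2 + x ^ 2) = a * ((x ^ 2 - 1) * (b ^ 2 - 1)) := by
  rw [div_eq_iff hden] at hfix
  linear_combination -hfix

lemma IsUltrametricDist.norm_eq_of_norm_sub_lt {G : Type*} [SeminormedAddGroup G]
    [IsUltrametricDist G] {x y : G} (h : ‖x - y‖ < ‖y‖) : ‖x‖ = ‖y‖ := by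
  rw [← sub_add_cancel x y, norm_add_eq_max_of_norm_ne_norm h.ne, max_eq_right h.le]

section UltrametricField

variable {K : Type*} [NormedField K] [IsUltrametricDist K]

lemma norm_eq_one_of_norm_sub_one_lt_one {x : K} (hx : ‖x - 1‖ < 1) : ‖x‖ = 1 := by
  rw [← norm_one (α := K)] at hx ⊢
  exact norm_eq_of_norm_sub_lt hx

lemma norm_add_one_eq_one_of_norm_sub_one_lt_one (h2 : ‖(2 : K)‖ = 1) {x : K}
    (hx : ‖x - 1‖ < 1) : ‖x + 1‖ = 1 := by
  rw [← h2] at hx ⊢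
  exact norm_eq_of_norm_sub_lt (by rwa [show x + 1 - 2 = x - 1 by ring])

lemma norm_sq_sub_one_of_norm_sub_one_lt_one (h2 : ‖(2 : K)‖ = 1) {x : K}
    (hx : ‖x - 1‖ < 1) : ‖x ^ 2 - 1‖ = ‖x - 1‖ := by
  rw [show x ^ 2 - 1 = (x - 1) * (x + 1) by ring, norm_mul,
    norm_add_one_eq_one_of_norm_sub_one_lt_one h2 hx, mul_one]

lemma norm_sq_add_sq_eq_one_of_norm_sub_one_lt_one (h2 : ‖(2 : K)‖ = 1) {x y : K}
    (hx : ‖x - 1‖ < 1) (hy : ‖y - 1‖ < 1) : ‖x ^ 2 + y ^ 2‖ = 1 := by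
  have hsmall : ‖x ^ 2 + y ^ 2 - 2‖ < ‖(2 : K)‖ := by
    rw [show x ^ 2 + y ^ 2 - 2 = (x ^ 2 - 1) + (y ^ 2 - 1) by ring, h2]
    refine (norm_add_le_max _ _).trans_lt ?_
    rw [norm_sq_sub_one_of_norm_sub_one_lt_one h2 hx,
      norm_sq_sub_one_of_norm_sub_one_lt_one h2 hy]
    exact max_lt hx hy
  rw [norm_eq_of_norm_sub_lt hsmall, h2]

theorem norm_fixed_point_sub_eq (h2 : ‖(2 : K)‖ = 1) {a b x : K} (ha : ‖a - 1‖ < 1)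
    (hb : ‖b - 1‖ < 1) (hx : ‖x - 1‖ < 1) (hfix : a * (b ^ 2 * x ^ 2 + 1) / (b ^ 2 + x ^ 2) = x) :
    ‖x - a‖ = ‖x - 1‖ * ‖b - 1‖ := by
  have hden := norm_sq_add_sq_eq_one_of_norm_sub_one_lt_one h2 hb hx
  have key := congrArg norm <|
    sub_mul_eq_of_fixed_point (norm_ne_zero_iff.mp (by simp [hden])) hfix
  simpa only [norm_mul, hden, mul_one, norm_eq_one_of_norm_sub_one_lt_one ha, one_mul,
    norm_sq_sub_one_of_norm_sub_one_lt_one h2 hx, norm_sq_sub_one_of_norm_sub_one_lt_one h2 hb]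
    using key

end UltrametricField

lemma Padic.norm_two_eq_one {p : ℕ} [Fact p.Prime] (hp : 3 ≤ p) : ‖(2 : ℚ_[p])‖ = 1 := by
  exact_mod_cast Padic.norm_natCast_eq_one_iff.mpr
    ((Nat.coprime_primes Fact.out Nat.prime_two).mpr (by omega))

theorem stmt9 (p : ℕ) [Fact p.Prime] (hp : 3 ≤ p) (a b : ℚ_[p])
    (ha : ‖a - 1‖ < 1) (hb : ‖b - 1‖ < 1) (x₀ : ℚ_[p])
    (hx0 : ‖x₀ - 1‖ < 1) (hfix0 : a * (b ^ 2 * x₀ ^ 2 + 1) / (b ^ 2 + x₀ ^ 2) = x₀) :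
    ‖x₀ - a‖ = ‖x₀ - 1‖ * ‖b - 1‖ ∧ (b ≠ 1 → ‖x₀ - a‖ < ‖b - 1‖) := by
  have hmain := norm_fixed_point_sub_eq (Padic.norm_two_eq_one hp) ha hb hx0 hfix0
  refine ⟨hmain, fun hb1 => ?_⟩
  rw [hmain]
  exact mul_lt_of_lt_one_left (norm_pos_iff.mpr (sub_ne_zero.mpr hb1)) hx0
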